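/- arXiv:2210.02911 — 3 statements merged into one kernel-verified Lean document; each statement's English description precedes it below -/
import Mathlib

section
/- Suppose the equation (r z')' = q z on ℝ has a PFSS {u, v}. Then the only solution z of this equation belonging to L_p(ℝ) for some p ∈ [1, ∞) is z ≡ 0. -/
open MeasureTheory Filter Set intervalIntegral

def IsSol (r q z : ℝ → ℝ) : Prop :=
  Differentiable ℝ z ∧ Differentiable ℝ (fun x => r x * deriv z x) ∧
    ∀ x, deriv (fun y => r y * deriv z y) x = q x * z x

def IsPFSS (r q u v : ℝ → ℝ) : Prop :=
  IsSol r q u ∧ IsSol r q v ∧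
  (∀ x, 0 < u x) ∧ (∀ x, 0 < v x) ∧
  (∀ x, deriv u x ≤ 0) ∧ (∀ x, 0 ≤ deriv v x) ∧
  (∀ x, r x * (deriv v x * u x - deriv u x * v x) = 1) ∧
  Tendsto (fun x => u x / v x) atTop (nhds 0) ∧
  Tendsto (fun x => v x / u x) atBot (nhds 0)

/-! By Abel's identity the Wronskians `W(v, z)` and `W(z, u)` are constants `A`, `B`, and since
`W(v, u) = 1` every solution is `z = A u + B v`. Along `+∞` we have `z / v → B` while `v` is
increasing and positive, so `B ≠ 0` would keep `|z|` above a positive constant on a half-line,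
which no `Lᵖ` function can do; symmetrically `z / u → A` along `-∞` forces `A = 0`. -/

namespace MeasureTheory

variable {α : Type*} [MeasurableSpace α] {μ : Measure α} {p : ENNReal} {l : Filter α}

theorem MemLp.not_eventually_le_norm {f : α → ℝ} (hl : ∀ s ∈ l, μ s = ⊤) (hf : MemLp f p μ)
    (hp0 : p ≠ 0) (hptop : p ≠ ⊤) {c : ℝ} (hc : 0 < c) : ¬ ∀ᶠ x in l, c ≤ ‖f x‖ := by
  intro hfc
  have hfin := hf.meas_ge_lt_top hp0 hptop (ε := c.toNNReal) (by simpa using hc)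
  exact hfin.ne (hl _ (hfc.mono fun _ hx => Real.toNNReal_le_iff_le_coe.2 hx))

theorem MemLp.eq_zero_of_tendsto_div {f g : α → ℝ} (hl : ∀ s ∈ l, μ s = ⊤) (hf : MemLp f p μ)
    (hp0 : p ≠ 0) (hptop : p ≠ ⊤) {m B : ℝ} (hm : 0 < m) (hg : ∀ᶠ x in l, m ≤ g x)
    (hfg : Tendsto (fun x => f x / g x) l (nhds B)) : B = 0 := by
  by_contra hB
  have hBpos : 0 < |B| := abs_pos.2 hB
  refine hf.not_eventually_le_norm hl hp0 hptop (mul_pos (half_pos hBpos) hm) ?_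
  filter_upwards [hfg.abs.eventually_const_lt (half_lt_self hBpos), hg] with x hfgx hgx
  have hgx0 : 0 < g x := hm.trans_le hgx
  calc |B| / 2 * m ≤ |f x / g x| * g x := mul_le_mul hfgx.le hgx hm.le (abs_nonneg _)
    _ = ‖f x‖ := by rw [abs_div, abs_of_pos hgx0, div_mul_cancel₀ _ hgx0.ne', Real.norm_eq_abs]

end MeasureTheory

theorem Real.volume_eq_top_of_mem_atTop {s : Set ℝ} (hs : s ∈ atTop) : volume s = ⊤ := by
  obtain ⟨a, ha⟩ := mem_atTop_sets.1 hs
  exact top_unique (Real.volume_Ici (a := a) ▸ measure_mono fun x hx => ha x hx)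

theorem Real.volume_eq_top_of_mem_atBot {s : Set ℝ} (hs : s ∈ atBot) : volume s = ⊤ := by
  obtain ⟨a, ha⟩ := mem_atBot_sets.1 hs
  exact top_unique (Real.volume_Iic (a := a) ▸ measure_mono fun x hx => ha x hx)

theorem tendsto_div_of_eq_add {l : Filter ℝ} {u v z : ℝ → ℝ} {A B : ℝ}
    (hz : ∀ x, z x = A * u x + B * v x) (hv : ∀ x, v x ≠ 0)
    (huv : Tendsto (fun x => u x / v x) l (nhds 0)) :
    Tendsto (fun x => z x / v x) l (nhds B) := by
  have hlim := (huv.const_mul A).add_const B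
  rw [mul_zero, zero_add] at hlim
  refine hlim.congr fun x => ?_
  rw [hz x]
  field_simp [hv x]

noncomputable def wronskian (r f g : ℝ → ℝ) (x : ℝ) : ℝ := r x * (deriv f x * g x - deriv g x * f x)

theorem IsSol.wronskian_eq {r q f g : ℝ → ℝ} (hf : IsSol r q f) (hg : IsSol r q g) (x y : ℝ) :
    wronskian r f g x = wronskian r f g y := by
  obtain ⟨hfd, hrfd, hfode⟩ := hf
  obtain ⟨hgd, hrgd, hgode⟩ := hg
  have hW : wronskian r f g = fun s => (r s * deriv f s) * g s - (r s * deriv g s) * f s := by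
    funext s; simp only [wronskian]; ring
  rw [hW]
  refine is_const_of_deriv_eq_zero ((hrfd.mul hgd).sub (hrgd.mul hfd)) (fun t => ?_) x y
  change deriv (fun s => (r s * deriv f s) * g s - (r s * deriv g s) * f s) t = 0
  rw [deriv_fun_sub ((hrfd t).fun_mul (hgd t)) ((hrgd t).fun_mul (hfd t)),
    deriv_fun_mul (hrfd t) (hgd t), deriv_fun_mul (hrgd t) (hfd t), hfode t, hgode t]
  ring

theorem IsSol.eq_wronskian_combination {r q u v z : ℝ → ℝ} (hz : IsSol r q z)
    (hu : IsSol r q u) (hv : IsSol r q v) (hvu : ∀ x, wronskian r v u x = 1) :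
    ∀ x, z x = wronskian r v z 0 * u x + wronskian r z u 0 * v x := by
  intro x
  rw [← hv.wronskian_eq hz x, ← hz.wronskian_eq hu x]
  have hvux := hvu x
  simp only [wronskian] at hvux ⊢
  linear_combination (-z x) * hvux

theorem stmt6 (r q u v z : ℝ → ℝ) (h : IsPFSS r q u v) (hz : IsSol r q z)
    (p : ℝ) (hp : 1 ≤ p) (hzp : MemLp z (ENNReal.ofReal p) volume) :
    ∀ x, z x = 0 := by
  obtain ⟨hu, hv, hupos, hvpos, hu', hv', hvu, hTop, hBot⟩ := h
  set A := wronskian r v z 0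
  set B := wronskian r z u 0
  have hzAB : ∀ x, z x = A * u x + B * v x := hz.eq_wronskian_combination hu hv hvu
  have hp0 : ENNReal.ofReal p ≠ 0 := by rw [ne_eq, ENNReal.ofReal_eq_zero]; linarith
  have hB : B = 0 := hzp.eq_zero_of_tendsto_div (fun _ => Real.volume_eq_top_of_mem_atTop) hp0
    ENNReal.ofReal_ne_top (hvpos 0)
    ((eventually_ge_atTop 0).mono fun _ hx => monotone_of_deriv_nonneg hv.1 hv' hx)
    (tendsto_div_of_eq_add hzAB (fun x => (hvpos x).ne') hTop)
  have hA : A = 0 := hzp.eq_zero_of_tendsto_div (fun _ => Real.volume_eq_top_of_mem_atBot) hp0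
    ENNReal.ofReal_ne_top (hupos 0)
    ((eventually_le_atBot 0).mono fun _ hx => antitone_of_deriv_nonpos hu.1 hu' hx)
    (tendsto_div_of_eq_add (fun x => (hzAB x).trans (add_comm _ _)) (fun x => (hupos x).ne') hBot)
  intro x
  rw [hzAB x, hA, hB, zero_mul, zero_mul, add_zero]
end

section
/- Let {u, v} be a PFSS of (r z')' = q z and ρ = u v. For each x ∈ ℝ the equation ∫_{x-s}^{x+s} dt/(r(t)ρ(t)) = 1 in s ≥ 0 has a unique positive solution s(x), and the function s satisfies the Lipschitz bound |s(x+t) - s(x)| ≤ |t| for all |t| ≤ s(x). -/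
open MeasureTheory Filter Set intervalIntegral

/-!
Since `r (v' u - u' v) = 1`, the integrand `1 / (r u v)` is the derivative of `G = log (v / u)`,
so `F_x(s) = G (x + s) - G (x - s)`. As `G` is continuous, strictly increasing and tends to `∞`,
`F_x` increases strictly from `F_x(0) = 0` to `∞`, which gives existence and uniqueness of `s(x)`.
For the Lipschitz bound, `[x - s(x), x + s(x)]` lies in the interval of radius `s(x) + |t|` around
`x + t` and contains the one of radius `s(x) - |t|`; comparing the values of `F_{x+t}` gives
`s(x) - |t| ≤ s(x + t) ≤ s(x) + |t|`.
-/

def centralDiff (g : ℝ → ℝ) (x s : ℝ) : ℝ := g (x + s) - g (x - s)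

section centralDiff

variable {g : ℝ → ℝ}

@[simp]
lemma centralDiff_zero (g : ℝ → ℝ) (x : ℝ) : centralDiff g x 0 = 0 := by
  simp [centralDiff]

lemma strictMono_centralDiff (hg : StrictMono g) (x : ℝ) : StrictMono (centralDiff g x) :=
  fun _ _ hab => sub_lt_sub (hg (by linarith)) (hg (by linarith))

lemma centralDiff_le_centralDiff (hg : Monotone g) {x y a b : ℝ} (hr : x + a ≤ y + b)
    (hl : y - b ≤ x - a) : centralDiff g x a ≤ centralDiff g y b :=
  sub_le_sub (hg hr) (hg hl)

lemma tendsto_centralDiff_atTop (hg : Monotone g) (htop : Tendsto g atTop atTop) (x : ℝ) :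
    Tendsto (centralDiff g x) atTop atTop := by
  have hright : Tendsto (fun s => g (x + s) - g x) atTop atTop :=
    tendsto_atTop_add_const_right _ _ (htop.comp (tendsto_atTop_add_const_left _ x tendsto_id))
  refine tendsto_atTop_mono' _ ?_ hright
  filter_upwards [eventually_ge_atTop 0] with s hs
  exact sub_le_sub_left (hg (by linarith)) _

lemma exists_centralDiff_eq (hgc : Continuous g) (hg : Monotone g) (htop : Tendsto g atTop atTop)
    (x : ℝ) {c : ℝ} (hc0 : 0 ≤ c) : ∃ s, 0 ≤ s ∧ centralDiff g x s = c := by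
  have hcont : Continuous (centralDiff g x) :=
    (hgc.comp (continuous_const_add x)).sub (hgc.comp (continuous_sub_left x))
  exact intermediate_value_Ici (a := 0) hcont.continuousOn (tendsto_centralDiff_atTop hg htop x)
    (by simpa using hc0)

lemma abs_sub_le_of_centralDiff_eq (hg : StrictMono g) {x y a b : ℝ}
    (h : centralDiff g x a = centralDiff g y b) : |b - a| ≤ |y - x| := by
  have hy := strictMono_centralDiff hg y
  have hlo := neg_abs_le (y - x)
  have hhi := le_abs_self (y - x)
  have hupper : centralDiff g y b ≤ centralDiff g y (a + |y - x|) :=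
    h ▸ centralDiff_le_centralDiff hg.monotone (by linarith) (by linarith)
  have hlower : centralDiff g y (a - |y - x|) ≤ centralDiff g y b :=
    h ▸ centralDiff_le_centralDiff hg.monotone (by linarith) (by linarith)
  rw [abs_sub_le_iff]
  constructor <;> linarith [hy.le_iff_le.1 hupper, hy.le_iff_le.1 hlower]

end centralDiff

namespace IsPFSS

variable {r q u v : ℝ → ℝ}

lemma r_pos (h : IsPFSS r q u v) (x : ℝ) : 0 < r x := by
  obtain ⟨-, -, hu, hv, hu', hv', hW, -⟩ := h
  have hW_nonneg : 0 ≤ deriv v x * u x - deriv u x * v x :=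
    sub_nonneg.2 ((mul_nonpos_of_nonpos_of_nonneg (hu' x) (hv x).le).trans
      (mul_nonneg (hv' x) (hu x).le))
  exact pos_of_mul_pos_left (by rw [hW x]; exact one_pos) hW_nonneg

lemma integrand_pos (h : IsPFSS r q u v) (x : ℝ) : 0 < 1 / (r x * (u x * v x)) :=
  one_div_pos.2 (mul_pos (h.r_pos x) (mul_pos (h.2.2.1 x) (h.2.2.2.1 x)))

lemma hasDerivAt_log_div (h : IsPFSS r q u v) (x : ℝ) :
    HasDerivAt (fun y => Real.log (v y / u y)) (1 / (r x * (u x * v x))) x := by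
  have hrx := (h.r_pos x).ne'
  obtain ⟨⟨hud, -⟩, ⟨hvd, -⟩, hu, hv, -, -, hW, -⟩ := h
  have hux := (hu x).ne'
  have hvx := (hv x).ne'
  have hdiv : HasDerivAt (fun y => v y / u y)
      ((deriv v x * u x - v x * deriv u x) / u x ^ 2) x :=
    (hvd x).hasDerivAt.div (hud x).hasDerivAt hux
  convert hdiv.log (div_ne_zero hvx hux) using 1
  field_simp
  linear_combination -hW x

lemma continuous_log_div (h : IsPFSS r q u v) : Continuous fun y => Real.log (v y / u y) :=
  continuous_iff_continuousAt.2 fun x => (h.hasDerivAt_log_div x).continuousAt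

lemma strictMono_log_div (h : IsPFSS r q u v) : StrictMono fun y => Real.log (v y / u y) :=
  strictMono_of_hasDerivAt_pos h.hasDerivAt_log_div h.integrand_pos

lemma tendsto_log_div_atTop (h : IsPFSS r q u v) :
    Tendsto (fun y => Real.log (v y / u y)) atTop atTop := by
  obtain ⟨-, -, hu, hv, -, -, -, htop, -⟩ := h
  have hpos : Tendsto (fun y => u y / v y) atTop (nhdsWithin 0 (Ioi 0)) :=
    tendsto_nhdsWithin_of_tendsto_nhds_of_eventually_within _ htop
      (Eventually.of_forall fun y => div_pos (hu y) (hv y))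
  refine Real.tendsto_log_atTop.comp (hpos.inv_tendsto_nhdsGT_zero.congr fun y => ?_)
  simp

lemma integral_eq_centralDiff (h : IsPFSS r q u v) (x s : ℝ) :
    ∫ t in (x - s)..(x + s), 1 / (r t * (u t * v t)) =
      centralDiff (fun y => Real.log (v y / u y)) x s :=
  integral_eq_sub_of_hasDerivAt (fun y _ => h.hasDerivAt_log_div y)
    (intervalIntegrable_deriv_of_nonneg h.continuous_log_div.continuousOn
      (fun y _ => h.hasDerivAt_log_div y) fun y _ => (h.integrand_pos y).le)

end IsPFSS

theorem stmt7_general (r q u v ρ : ℝ → ℝ) (h : IsPFSS r q u v) (hρ : ∀ x, ρ x = u x * v x) :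
    (∀ x : ℝ, ∃! s : ℝ, 0 ≤ s ∧ (∫ t in (x - s)..(x + s), 1 / (r t * ρ t)) = 1) ∧
    ∀ s : ℝ → ℝ, (∀ x, 0 ≤ s x ∧ (∫ t in (x - s x)..(x + s x), 1 / (r t * ρ t)) = 1) →
      (∀ x, 0 < s x) ∧ ∀ x t : ℝ, |t| ≤ s x → |s (x + t) - s x| ≤ |t| := by
  obtain rfl : ρ = fun x => u x * v x := funext hρ
  simp only [h.integral_eq_centralDiff]
  have hG := h.strictMono_log_div
  refine ⟨fun x => ?_, fun s hs => ⟨fun x => ?_, fun x t _ => ?_⟩⟩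
  · obtain ⟨s, hs0, hs⟩ := exists_centralDiff_eq h.continuous_log_div hG.monotone
      h.tendsto_log_div_atTop x zero_le_one
    exact ⟨s, ⟨hs0, hs⟩, fun s' hs' =>
      (strictMono_centralDiff hG x).injective (hs'.2.trans hs.symm)⟩
  · exact (hs x).1.lt_of_ne fun h0 => by simpa [← h0] using (hs x).2
  · simpa using abs_sub_le_of_centralDiff_eq hG ((hs x).2.trans (hs (x + t)).2.symm)

theorem stmt7 (r q u v ρ : ℝ → ℝ) (h : IsPFSS r q u v) (hρ : ∀ x, ρ x = u x * v x)
    (hloc : LocallyIntegrable (fun t => 1 / (r t * ρ t)) volume) :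
    (∀ x : ℝ, ∃! s : ℝ, 0 ≤ s ∧ (∫ t in (x - s)..(x + s), 1 / (r t * ρ t)) = 1) ∧
    ∀ s : ℝ → ℝ, (∀ x, 0 ≤ s x ∧ (∫ t in (x - s x)..(x + s x), 1 / (r t * ρ t)) = 1) →
      (∀ x, 0 < s x) ∧ ∀ x t : ℝ, |t| ≤ s x → |s (x + t) - s x| ≤ |t| :=
  stmt7_general r q u v ρ h hρ
end

section
/- Let r(x) = (1+x²)^α with 1/2 < α < 1, ρ(x) = (1/w₀) ∫_{-∞}^x dt/r · ∫_x^∞ dt/r, and s(x) the unique positive solution of ∫_{x-s}^{x+s} dt/(r ρ) = 1. Then sup_{x∈ℝ} ρ(x) s(x) = ∞. -/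
open MeasureTheory Filter Set intervalIntegral

/-! For `x ≥ 1` the two factors of `ρ` satisfy `∫_{-∞}^x 1/r ≥ ∫_{-∞}^0 1/r > 0` and
`∫_x^∞ 1/r ≥ ∫_x^∞ (2t²)^{-α} ≍ x^{1-2α}`, so `ρ x ≳ x^{1-2α}` and `r t ρ t ≳ t`. Hence
`1/(rρ) ≲ 1/x` on `[x - s, x + s]` unless `s ≥ x/2`, and the normalisation of `s` forces
`s x ≳ x`. Thus `ρ x s x ≳ x^{2-2α} → ∞`, since `α < 1`. -/

open Real

lemma integrable_one_div_one_add_sq_rpow {α : ℝ} (hα : 1 / 2 < α) :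
    Integrable fun t : ℝ => 1 / (1 + t ^ 2) ^ α := by
  have h := integrable_rpow_neg_one_add_norm_sq (E := ℝ) (μ := volume) (r := 2 * α)
    (by simp only [Module.finrank_self, Nat.cast_one]; linarith)
  refine h.congr (.of_forall fun t => ?_)
  dsimp only
  rw [norm_eq_abs, sq_abs, neg_div, mul_div_cancel_left₀ α two_ne_zero, rpow_neg (by positivity),
    one_div]

lemma setIntegral_pos_of_forall_pos {X : Type*} [MeasurableSpace X] {μ : Measure X} {f : X → ℝ}
    {s : Set X} (hf : Integrable f μ) (hpos : ∀ t, 0 < f t) (hs : μ s ≠ 0) :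
    0 < ∫ t in s, f t ∂μ := by
  rw [setIntegral_pos_iff_support_of_nonneg_ae (.of_forall fun t => (hpos t).le) hf.integrableOn,
    show Function.support f = univ from eq_univ_of_forall fun t => (hpos t).ne', univ_inter]
  exact pos_iff_ne_zero.mpr hs

lemma rpow_div_le_setIntegral_Ioi_one_div_one_add_sq_rpow {α x : ℝ} (hα : 1 / 2 < α)
    (hx : 1 ≤ x) :
    x ^ (1 - 2 * α) / (2 ^ α * (2 * α - 1)) ≤ ∫ t in Ioi x, 1 / (1 + t ^ 2) ^ α := by
  have hx0 : 0 < x := by linarith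
  have hexp : -(2 * α) < -1 := by linarith
  calc x ^ (1 - 2 * α) / (2 ^ α * (2 * α - 1))
      = ∫ t in Ioi x, (2 ^ α)⁻¹ * t ^ (-(2 * α)) := by
        rw [MeasureTheory.integral_const_mul, integral_Ioi_rpow_of_lt hexp hx0]
        rw [show -(2 * α) + 1 = 1 - 2 * α by ring, show 2 * α - 1 = -(1 - 2 * α) by ring]
        field_simp
    _ ≤ ∫ t in Ioi x, 1 / (1 + t ^ 2) ^ α := by
        refine setIntegral_mono_on ((integrableOn_Ioi_rpow_of_lt hexp hx0).const_mul _)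
          (integrable_one_div_one_add_sq_rpow hα).integrableOn measurableSet_Ioi fun t ht => ?_
        have ht : 1 ≤ t := hx.trans (le_of_lt ht)
        have ht0 : 0 < t := by linarith
        calc (2 ^ α)⁻¹ * t ^ (-(2 * α)) = 1 / (2 * t ^ 2) ^ α := by
              rw [mul_rpow zero_le_two (sq_nonneg t), ← rpow_natCast, ← rpow_mul ht0.le,
                rpow_neg ht0.le]
              push_cast
              rw [mul_comm (2 : ℝ) α]
              field_simp
          _ ≤ 1 / (1 + t ^ 2) ^ α := by
              gcongr
              nlinarith

noncomputable def rho (α x : ℝ) : ℝ :=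
  (1 / ∫ t, 1 / (1 + t ^ 2) ^ α) *
    ((∫ t in Iic x, 1 / (1 + t ^ 2) ^ α) * ∫ t in Ioi x, 1 / (1 + t ^ 2) ^ α)

lemma exists_pos_mul_rpow_le_rho {α : ℝ} (hα : 1 / 2 < α) :
    ∃ c > 0, ∀ x, 1 ≤ x → c * x ^ (1 - 2 * α) ≤ rho α x := by
  have hint := integrable_one_div_one_add_sq_rpow hα
  have hpos : ∀ t : ℝ, 0 < 1 / (1 + t ^ 2) ^ α := fun t => by positivity
  set w₀ := ∫ t : ℝ, 1 / (1 + t ^ 2) ^ α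
  set A₀ := ∫ t in Iic (0 : ℝ), 1 / (1 + t ^ 2) ^ α
  have hw₀ : 0 < w₀ := by
    simpa only [Measure.restrict_univ] using
      setIntegral_pos_of_forall_pos hint hpos (s := univ) (by simp)
  have hA₀ : 0 < A₀ := setIntegral_pos_of_forall_pos hint hpos (by simp)
  have hα' : 0 < 2 * α - 1 := by linarith
  refine ⟨A₀ / (w₀ * (2 ^ α * (2 * α - 1))), by positivity, fun x hx => ?_⟩
  have hA : A₀ ≤ ∫ t in Iic x, 1 / (1 + t ^ 2) ^ α :=
    setIntegral_mono_set hint.integrableOn (.of_forall fun t => (hpos t).le)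
      (.of_forall (Iic_subset_Iic.mpr (by linarith)))
  have hB := rpow_div_le_setIntegral_Ioi_one_div_one_add_sq_rpow hα hx
  calc A₀ / (w₀ * (2 ^ α * (2 * α - 1))) * x ^ (1 - 2 * α)
      = 1 / w₀ * (A₀ * (x ^ (1 - 2 * α) / (2 ^ α * (2 * α - 1)))) := by
        field_simp
    _ ≤ rho α x := by
        unfold rho
        gcongr

lemma exists_pos_mul_le_mul_rho {α : ℝ} (hα : 1 / 2 < α) :
    ∃ c > 0, ∀ t, 1 ≤ t → c * t ≤ (1 + t ^ 2) ^ α * rho α t := by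
  obtain ⟨c, hc, hρ⟩ := exists_pos_mul_rpow_le_rho hα
  refine ⟨c, hc, fun t ht => ?_⟩
  have ht0 : 0 < t := by linarith
  have hr : t ^ (2 * α) ≤ (1 + t ^ 2) ^ α := by
    rw [rpow_mul ht0.le, rpow_two]
    gcongr
    linarith
  calc c * t = t ^ (2 * α) * (c * t ^ (1 - 2 * α)) := by
        rw [mul_left_comm, ← rpow_add ht0, add_sub_cancel, rpow_one]
    _ ≤ (1 + t ^ 2) ^ α * rho α t := by
        gcongr
        exact hρ t ht

lemma min_mul_le_of_integral_one_div_eq_one {f : ℝ → ℝ} {c x s : ℝ} (hc : 0 < c) (hx : 2 ≤ x)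
    (hs : 0 < s) (hf : ∀ t, 1 ≤ t → c * t ≤ f t)
    (h : ∫ t in (x - s)..(x + s), 1 / f t = 1) : min (1 / 2) (c / 4) * x ≤ s := by
  rcases le_or_gt (x / 2) s with hsx | hsx
  · exact (mul_le_mul_of_nonneg_right (min_le_left _ _) (by linarith)).trans (by linarith)
  have hbound : ∀ t ∈ uIoc (x - s) (x + s), ‖1 / f t‖ ≤ 1 / (c * (x / 2)) := by
    intro t ht
    rw [uIoc_of_le (by linarith)] at ht
    have hct : c * (x / 2) ≤ f t :=
      (mul_le_mul_of_nonneg_left (by linarith [ht.1]) hc.le).trans (hf t (by linarith [ht.1]))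
    rw [norm_of_nonneg (one_div_nonneg.mpr ((by positivity : (0 : ℝ) ≤ c * (x / 2)).trans hct))]
    gcongr
  have key := norm_integral_le_of_norm_le_const hbound
  rw [h, norm_one, show x + s - (x - s) = 2 * s by ring, abs_of_pos (by positivity)] at key
  have hcx : c * x / 4 ≤ s := by
    rw [div_mul_eq_mul_div, one_mul, le_div_iff₀ (by positivity)] at key
    linarith
  exact (mul_le_mul_of_nonneg_right (min_le_right _ _) (by linarith)).trans (by linarith)

theorem stmt17 (α : ℝ) (hα1 : 1 / 2 < α) (hα2 : α < 1) (r : ℝ → ℝ)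
    (hr : ∀ x, r x = (1 + x ^ 2) ^ α) (w₀ : ℝ) (hw : w₀ = ∫ t, 1 / r t) (ρ s : ℝ → ℝ)
    (hρ : ∀ x, ρ x = (1 / w₀) * ((∫ t in Iic x, 1 / r t) * (∫ t in Ioi x, 1 / r t)))
    (hs : ∀ x, 0 < s x ∧ (∫ t in (x - s x)..(x + s x), 1 / (r t * ρ t)) = 1) :
    ∀ C : ℝ, ∃ x, C < ρ x * s x := by
  obtain rfl : r = fun x => (1 + x ^ 2) ^ α := funext hr
  subst hw
  obtain rfl : ρ = rho α := funext hρ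
  obtain ⟨c, hc, hrρ⟩ := exists_pos_mul_le_mul_rho hα1
  obtain ⟨c', hc', hρ_lower⟩ := exists_pos_mul_rpow_le_rho hα1
  set m := min (1 / 2) (c / 4)
  have hm : 0 < m := lt_min (by norm_num) (by positivity)
  have hlower : ∀ x, 2 ≤ x → c' * m * x ^ (2 - 2 * α) ≤ rho α x * s x := fun x hx => by
    have hs_lower : m * x ≤ s x :=
      min_mul_le_of_integral_one_div_eq_one hc hx (hs x).1 hrρ (hs x).2
    calc c' * m * x ^ (2 - 2 * α) = c' * x ^ (1 - 2 * α) * (m * x) := by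
          rw [show 2 - 2 * α = 1 - 2 * α + 1 by ring, rpow_add (by linarith), rpow_one]
          ring
      _ ≤ rho α x * s x := by
          gcongr
          · exact (by positivity : (0 : ℝ) ≤ c' * x ^ (1 - 2 * α)).trans (hρ_lower x (by linarith))
          · exact hρ_lower x (by linarith)
  have htendsto : Tendsto (fun x => rho α x * s x) atTop atTop :=
    tendsto_atTop_mono' _ ((eventually_ge_atTop 2).mono hlower)
      ((tendsto_rpow_atTop (by linarith)).const_mul_atTop (by positivity))
  exact fun C => (htendsto.eventually_gt_atTop C).exists
end
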